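/- For every q ∈ ℂ and x, y ∈ I, the series Σ_{n≥0} |q|^n W^{⊗(n+1)}(x,y) converges and is bounded by W(x,y) · exp(|q| ∫_{(x,y)} W(x,u) m(du)); consequently M^{(q)}(x,y) := Σ_{n≥0} q^n W^{⊗(n+1)}(x,y) defines an entire function of q ∈ ℂ for each fixed x, y. -/

import Mathlib

/-!
Fix `x, y` and put `F u = ∫_{(u,y)} W(x,t) m(dt)`. For `x ≤ u ≤ t ≤ y` monotonicity gives
`W(u,t) ≤ W(x,t)` and `W(t,y) ≤ W(u,y)`, so by induction `W^{⊗(n+1)}(u,y) ≤ W(u,y) F(u)^n / n!`,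
provided `∫_{(u,y)} W(x,t) F(t)^n m(dt) ≤ F(u)^{n+1} / (n+1)`. With `ν = W(x,·) m` this is
`∫ ν(t,∞)^n ν(dt) ≤ ν(ℝ)^{n+1} / (n+1)`: the left side is the `ν^{⊗(n+1)}`-measure of the event
that the first coordinate is the strict minimum, and the `n+1` such events are disjoint and have
equal measure by exchangeability. Summing the factorial bound against `|q|^n` gives the exponential
bound, and the resulting infinite radius of convergence makes `M^{(q)}` entire.
-/

open MeasureTheory Set Filter

noncomputable def otimes (m : Measure ℝ) (f g : ℝ → ℝ → ℝ) : ℝ → ℝ → ℝ :=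
  fun x y => ∫ u in Set.Ioo x y, f x u * g u y ∂m

/-- `iterW m W n = W^{⊗(n+1)}` -/
noncomputable def iterW (m : Measure ℝ) (W : ℝ → ℝ → ℝ) : ℕ → ℝ → ℝ → ℝ
  | 0 => W
  | n + 1 => otimes m W (iterW m W n)

/-- Analytic extension `M^{(q)}(x,y) = Σ_{n≥0} q^n W^{⊗(n+1)}(x,y)` for complex `q`. -/
noncomputable def Mq (m : Measure ℝ) (W : ℝ → ℝ → ℝ) (q : ℂ) (x y : ℝ) : ℂ :=
  ∑' n : ℕ, q ^ n * ((iterW m W n x y : ℝ) : ℂ)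

/-- Real version of `M^{(q)}`. -/
noncomputable def Mr (m : Measure ℝ) (W : ℝ → ℝ → ℝ) (q : ℝ) (x y : ℝ) : ℝ :=
  ∑' n : ℕ, q ^ n * iterW m W n x y

/-- `Z^{(q)}(x,y) = 1 + Σ_{n≥0} q^{n+1} ∫_{(x,y)} W^{⊗(n+1)}(x,u) m(du)`. -/
noncomputable def Zq (m : Measure ℝ) (W : ℝ → ℝ → ℝ) (q : ℂ) (x y : ℝ) : ℂ :=
  1 + ∑' n : ℕ, q ^ (n + 1) * ((∫ u in Set.Ioo x y, iterW m W n x u ∂m : ℝ) : ℂ)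

open scoped NNReal Nat

section TailMeasurePower

variable {α : Type*} [LinearOrder α] {n : ℕ}

def strictMinAt (j : Fin n) : Set (Fin n → α) := {x | ∀ i ≠ j, x j < x i}

lemma pairwise_disjoint_strictMinAt :
    Pairwise (Function.onFun Disjoint (strictMinAt : Fin n → Set (Fin n → α))) :=
  fun j k hjk => disjoint_left.2 fun _ hj hk => (hj k hjk.symm).not_gt (hk j hjk)

variable [MeasurableSpace α]

lemma preimage_piCongrLeft_strictMinAt (σ : Equiv.Perm (Fin n)) (j : Fin n) :
    MeasurableEquiv.piCongrLeft (fun _ => α) σ ⁻¹' strictMinAt (σ j) = strictMinAt j := by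
  ext x
  simp only [strictMinAt, mem_preimage, mem_ofPred_eq, MeasurableEquiv.coe_piCongrLeft]
  rw [σ.surjective.forall]
  simp only [σ.injective.ne_iff, Equiv.piCongrLeft_apply_apply]

lemma antitone_setIntegral_Ioi {μ : Measure α} {f : α → ℝ} (hf0 : 0 ≤ f)
    (hfi : Integrable f μ) :
    Antitone fun u => ∫ t in Ioi u, f t ∂μ := fun _ _ hab =>
  setIntegral_mono_set hfi.integrableOn (ae_of_all _ hf0) (Ioi_subset_Ioi hab).eventuallyLE

variable [TopologicalSpace α] [OrderClosedTopology α] [SecondCountableTopology α]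
  [BorelSpace α]

lemma measurableSet_strictMinAt (j : Fin n) : MeasurableSet (strictMinAt (α := α) j) := by
  have : strictMinAt (α := α) j = ⋂ i ∈ ({j}ᶜ : Set (Fin n)), {x | x j < x i} := by
    ext x; simp [strictMinAt]
  rw [this]
  exact .biInter (to_countable _) fun i _ =>
    measurableSet_lt (measurable_pi_apply j) (measurable_pi_apply i)

variable (ν : Measure α) [SigmaFinite ν]

lemma measure_pi_strictMinAt_eq (σ : Equiv.Perm (Fin n)) (j : Fin n) :
    Measure.pi (fun _ => ν) (strictMinAt (σ j)) = Measure.pi (fun _ => ν) (strictMinAt j) := by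
  rw [← (measurePreserving_piCongrLeft (fun _ => ν) σ).measure_preimage
    (measurableSet_strictMinAt _).nullMeasurableSet, preimage_piCongrLeft_strictMinAt]

lemma measure_pi_strictMinAt_zero :
    Measure.pi (fun _ => ν) (strictMinAt (0 : Fin (n + 1))) = ∫⁻ a, ν (Ioi a) ^ n ∂ν := by
  set s : Set (α × (Fin n → α)) := {p | ∀ j, p.1 < p.2 j}
  have hs : MeasurableSet s := by
    simp only [s, ofPred_forall]
    exact .iInter fun j =>
      measurableSet_lt measurable_fst ((measurable_pi_apply j).comp measurable_snd)
  have hpre : strictMinAt (α := α) (0 : Fin (n + 1)) =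
      MeasurableEquiv.piFinSuccAbove (fun _ => α) 0 ⁻¹' s := by
    ext x
    simp [strictMinAt, s, Fin.forall_fin_succ, Fin.tail]
  rw [hpre, (measurePreserving_piFinSuccAbove (fun _ => ν) 0).measure_preimage
    hs.nullMeasurableSet, Measure.prod_apply hs]
  congr 1 with a
  have : Prod.mk a ⁻¹' s = univ.pi fun _ => Ioi a := by ext; simp [s]
  simp [this, Measure.pi_pi]

theorem lintegral_measure_Ioi_pow_le (n : ℕ) :
    ∫⁻ a, ν (Ioi a) ^ n ∂ν ≤ ν univ ^ (n + 1) / (n + 1) := by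
  set π := Measure.pi fun _ : Fin (n + 1) => ν
  have hsum : ∑ j, π (strictMinAt j) ≤ ν univ ^ (n + 1) := calc
    ∑ j, π (strictMinAt j) = π (⋃ j, strictMinAt j) := by
      rw [measure_iUnion pairwise_disjoint_strictMinAt measurableSet_strictMinAt, tsum_fintype]
    _ ≤ π univ := measure_mono (subset_univ _)
    _ = ν univ ^ (n + 1) := by simp [π, Measure.pi_univ]
  have hconst : ∀ j, π (strictMinAt j) = π (strictMinAt 0) := fun j => by
    simpa using measure_pi_strictMinAt_eq ν (Equiv.swap 0 j) 0
  rw [Finset.sum_congr rfl fun j _ => hconst j, Finset.sum_const, Finset.card_univ,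
    Fintype.card_fin, nsmul_eq_mul, measure_pi_strictMinAt_zero] at hsum
  rw [ENNReal.le_div_iff_mul_le (by simp) (by simp), mul_comm]
  exact_mod_cast hsum

theorem integral_mul_integral_Ioi_pow_le {μ : Measure α} {f : α → ℝ} (hf0 : 0 ≤ f)
    (hfi : Integrable f μ) (n : ℕ) :
    ∫ t, f t * (∫ s in Ioi t, f s ∂μ) ^ n ∂μ ≤ (∫ t, f t ∂μ) ^ (n + 1) / (n + 1) := by
  set ν := μ.withDensity fun t => ENNReal.ofReal (f t)
  have : IsFiniteMeasure ν := isFiniteMeasure_withDensity_ofReal hfi.2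
  have hν : ∀ s, MeasurableSet s → (ν s).toReal = ∫ t in s, f t ∂μ := fun s hs => by
    rw [withDensity_apply _ hs, ← ofReal_integral_eq_lintegral_ofReal hfi.integrableOn
      (ae_of_all _ hf0), ENNReal.toReal_ofReal (setIntegral_nonneg hs fun t _ => hf0 t)]
  have hmeas : Measurable fun t => ν (Ioi t) ^ n :=
    (Antitone.measurable fun _ _ hab => measure_mono (Ioi_subset_Ioi hab)).pow_const n
  calc ∫ t, f t * (∫ s in Ioi t, f s ∂μ) ^ n ∂μ = ∫ t, (ν (Ioi t) ^ n).toReal ∂ν := by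
        rw [integral_withDensity_eq_integral_toReal_smul₀ hfi.aemeasurable.ennreal_ofReal
          (ae_of_all _ fun _ => ENNReal.ofReal_lt_top)]
        congr 1 with t
        rw [ENNReal.toReal_ofReal (hf0 t), ENNReal.toReal_pow, hν _ measurableSet_Ioi,
          smul_eq_mul]
    _ = (∫⁻ t, ν (Ioi t) ^ n ∂ν).toReal :=
        integral_toReal hmeas.aemeasurable (ae_of_all _ fun _ => by finiteness)
    _ ≤ (ν univ ^ (n + 1) / (n + 1)).toReal :=
        ENNReal.toReal_mono (by finiteness) (lintegral_measure_Ioi_pow_le ν n)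
    _ = (∫ t, f t ∂μ) ^ (n + 1) / (n + 1) := by
        rw [ENNReal.toReal_div, ENNReal.toReal_pow, hν _ MeasurableSet.univ,
          Measure.restrict_univ]
        norm_cast

theorem integral_Ioi_mul_integral_Ioi_pow_le {μ : Measure α} {f : α → ℝ} (hf0 : 0 ≤ f)
    (hfi : Integrable f μ) (n : ℕ) (u : α) :
    ∫ t in Ioi u, f t * (∫ s in Ioi t, f s ∂μ) ^ n ∂μ
      ≤ (∫ t in Ioi u, f t ∂μ) ^ (n + 1) / (n + 1) := by
  refine le_of_eq_of_le (setIntegral_congr_fun measurableSet_Ioi fun t (ht : u < t) => ?_)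
    (integral_mul_integral_Ioi_pow_le hf0 hfi.restrict n)
  rw [Measure.restrict_restrict measurableSet_Ioi, Ioi_inter_Ioi, sup_eq_left.2 ht.le]

end TailMeasurePower

theorem differentiable_tsum_pow_mul {𝕜 : Type*} [NontriviallyNormedField 𝕜] [CompleteSpace 𝕜]
    {a : ℕ → 𝕜} (ha : ∀ r : ℝ≥0, Summable fun n => (r : ℝ) ^ n * ‖a n‖) :
    Differentiable 𝕜 fun z => ∑' n, z ^ n * a n := by
  set p := FormalMultilinearSeries.ofScalars 𝕜 a
  have hp : p.radius = ⊤ := p.radius_eq_top_of_summable_norm fun r => by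
    simpa [p, FormalMultilinearSeries.ofScalars_norm, mul_comm] using ha r
  have hsum : p.sum = fun z => ∑' n, z ^ n * a n := by
    ext z
    simp [p, FormalMultilinearSeries.sum, mul_comm]
  intro z
  rw [← hsum]
  exact ((p.hasFPowerSeriesOnBall (hp ▸ ENNReal.zero_lt_top)).analyticAt_of_mem
    (by simp [hp])).differentiableAt

theorem summable_pow_mul_and_tsum_le_of_le_pow_div_factorial {a : ℕ → ℝ} {A C r : ℝ}
    (ha0 : ∀ n, 0 ≤ a n) (ha : ∀ n, a n ≤ A * C ^ n / n !) (hr : 0 ≤ r) :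
    Summable (fun n => r ^ n * a n) ∧ ∑' n, r ^ n * a n ≤ A * Real.exp (r * C) := by
  have hle : ∀ n, r ^ n * a n ≤ A * ((r * C) ^ n / n !) := fun n => calc
    r ^ n * a n ≤ r ^ n * (A * C ^ n / n !) := by gcongr; exact ha n
    _ = A * ((r * C) ^ n / n !) := by ring
  have hexp : Summable fun n => A * ((r * C) ^ n / n !) :=
    (Real.summable_pow_div_factorial _).mul_left A
  have hsum : Summable fun n => r ^ n * a n :=
    hexp.of_nonneg_of_le (fun n => mul_nonneg (pow_nonneg hr n) (ha0 n)) hle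
  refine ⟨hsum, (hsum.tsum_le_tsum hle hexp).trans_eq ?_⟩
  rw [tsum_mul_left, Real.exp_eq_exp_ℝ, NormedSpace.exp_eq_tsum_div]

section IterW

open Nat

variable (m : Measure ℝ) {W : ℝ → ℝ → ℝ}

lemma iterW_nonneg (hWnn : ∀ x y, 0 ≤ W x y) (n : ℕ) (u v : ℝ) : 0 ≤ iterW m W n u v := by
  induction n generalizing u with
  | zero => exact hWnn u v
  | succ n ih => exact integral_nonneg fun t => mul_nonneg (hWnn u t) (ih t)

lemma restrict_Ioo_restrict_Ioi {x y u : ℝ} (hu : x ≤ u) :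
    (m.restrict (Ioo x y)).restrict (Ioi u) = m.restrict (Ioo u y) := by
  rw [Measure.restrict_restrict measurableSet_Ioi, Ioi_inter_Ioo, sup_eq_left.2 hu]

theorem iterW_le_mul_integral_Ioi_pow_div_factorial (hWnn : ∀ x y, 0 ≤ W x y)
    (hWmono : ∀ x x' y : ℝ, x ≤ x' → x' ≤ y → W x' y ≤ W x y) {x y : ℝ}
    (hint : IntegrableOn (W x) (Ioo x y) m) (k : ℕ) {u : ℝ} (hu : x ≤ u) :
    iterW m W k u y ≤ W u y * (∫ t in Ioi u, W x t ∂m.restrict (Ioo x y)) ^ k / k ! := by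
  set μ := m.restrict (Ioo x y)
  set F := fun v => ∫ t in Ioi v, W x t ∂μ
  have hF_nonneg : ∀ t, 0 ≤ F t := fun t =>
    setIntegral_nonneg measurableSet_Ioi fun s _ => hWnn x s
  have hF_pow_le : ∀ j t, ‖F t ^ j‖ ≤ (∫ s, W x s ∂μ) ^ j := fun j t => by
    rw [norm_pow, Real.norm_of_nonneg (hF_nonneg t)]
    exact pow_le_pow_left₀ (hF_nonneg t) (setIntegral_le_integral hint (ae_of_all _ (hWnn x))) j
  induction k generalizing u with
  | zero => simp [iterW]
  | succ k ih =>
    have hbound_int :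
        Integrable (fun t => W u y / k ! * (W x t * F t ^ k)) (μ.restrict (Ioi u)) :=
      ((Integrable.restrict hint).mul_bdd
        ((antitone_setIntegral_Ioi (hWnn x) hint).measurable.pow_const k).aestronglyMeasurable
        (ae_of_all _ fun t => hF_pow_le k t)).const_mul _
    calc iterW m W (k + 1) u y = ∫ t in Ioi u, W u t * iterW m W k t y ∂μ := by
          rw [restrict_Ioo_restrict_Ioi m hu]; rfl
      _ ≤ ∫ t in Ioi u, W u y / k ! * (W x t * F t ^ k) ∂μ := by
          refine integral_mono_of_nonneg (ae_of_all _ fun t => mul_nonneg (hWnn u t)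
            (iterW_nonneg m hWnn k t y)) hbound_int ?_
          rw [restrict_Ioo_restrict_Ioi m hu]
          filter_upwards [ae_restrict_mem measurableSet_Ioo] with t ⟨hut, hty⟩
          have hiter : iterW m W k t y ≤ W u y * F t ^ k / k ! :=
            (ih (hu.trans hut.le)).trans (by
              gcongr
              exacts [pow_nonneg (hF_nonneg t) k, hWmono u t y hut.le hty.le])
          calc W u t * iterW m W k t y ≤ W x t * (W u y * F t ^ k / k !) :=
                mul_le_mul (hWmono x u t hu hut.le) hiter (iterW_nonneg m hWnn k t y) (hWnn x t)
            _ = W u y / k ! * (W x t * F t ^ k) := by ring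
      _ = W u y / k ! * ∫ t in Ioi u, W x t * F t ^ k ∂μ := integral_const_mul _ _
      _ ≤ W u y / k ! * (F u ^ (k + 1) / (k + 1)) := by
          gcongr
          · exact div_nonneg (hWnn u y) (by positivity)
          · exact integral_Ioi_mul_integral_Ioi_pow_le (hWnn x) hint k u
      _ = W u y * F u ^ (k + 1) / (k + 1) ! := by
          rw [factorial_succ]; push_cast; field_simp

theorem iterW_le_mul_pow_div_factorial (hWnn : ∀ x y, 0 ≤ W x y)
    (hWmono : ∀ x x' y : ℝ, x ≤ x' → x' ≤ y → W x' y ≤ W x y) {x y : ℝ}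
    (hint : IntegrableOn (W x) (Ioo x y) m) (n : ℕ) :
    iterW m W n x y ≤ W x y * (∫ t in Ioo x y, W x t ∂m) ^ n / n ! := by
  simpa [restrict_Ioo_restrict_Ioi m le_rfl] using
    iterW_le_mul_integral_Ioi_pow_div_factorial m hWnn hWmono hint n le_rfl

end IterW

theorem stmt1_general (I : Set ℝ) (m : Measure ℝ) (W : ℝ → ℝ → ℝ)
    (hWnn : ∀ x y, 0 ≤ W x y)
    (hWmono : ∀ x x' y : ℝ, x ≤ x' → x' ≤ y → W x' y ≤ W x y)
    (hWint : ∀ x y : ℝ, x ∈ I → y ∈ I → x < y →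
      IntegrableOn (fun u => W x u) (Set.Ioo x y) m)
    (q : ℂ) (x y : ℝ) (hx : x ∈ I) (hy : y ∈ I) :
    Summable (fun n : ℕ => ‖q‖ ^ n * iterW m W n x y) ∧
    (∑' n : ℕ, ‖q‖ ^ n * iterW m W n x y) ≤
      W x y * Real.exp (‖q‖ * ∫ u in Set.Ioo x y, W x u ∂m) ∧
    Differentiable ℂ (fun z : ℂ => Mq m W z x y) := by
  have hint : IntegrableOn (W x) (Ioo x y) m := by
    rcases lt_or_ge x y with hxy | hyx
    · exact hWint x y hx hy hxy
    · simp [Ioo_eq_empty hyx.not_gt]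
  have hM : ∀ r : ℝ, 0 ≤ r → Summable (fun n => r ^ n * iterW m W n x y) ∧
      ∑' n, r ^ n * iterW m W n x y ≤ W x y * Real.exp (r * ∫ u in Ioo x y, W x u ∂m) :=
    fun r hr => summable_pow_mul_and_tsum_le_of_le_pow_div_factorial
      (iterW_nonneg m hWnn · x y) (iterW_le_mul_pow_div_factorial m hWnn hWmono hint) hr
  refine ⟨(hM _ (norm_nonneg q)).1, (hM _ (norm_nonneg q)).2, ?_⟩
  exact differentiable_tsum_pow_mul fun r => by
    simpa [abs_of_nonneg (iterW_nonneg m hWnn _ x y)] using (hM r r.2).1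

theorem stmt1 (I : Set ℝ) (m : Measure ℝ) (W : ℝ → ℝ → ℝ)
    (hWmeas : Measurable (Function.uncurry W))
    (hWnn : ∀ x y, 0 ≤ W x y)
    (hWvanish : ∀ x y : ℝ, y < x → W x y = 0)
    (hWmono : ∀ x x' y : ℝ, x ≤ x' → x' ≤ y → W x' y ≤ W x y)
    (hWint : ∀ x y : ℝ, x ∈ I → y ∈ I → x < y →
      IntegrableOn (fun u => W x u) (Set.Ioo x y) m)
    (q : ℂ) (x y : ℝ) (hx : x ∈ I) (hy : y ∈ I) :
    Summable (fun n : ℕ => ‖q‖ ^ n * iterW m W n x y) ∧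
    (∑' n : ℕ, ‖q‖ ^ n * iterW m W n x y) ≤
      W x y * Real.exp (‖q‖ * ∫ u in Set.Ioo x y, W x u ∂m) ∧
    Differentiable ℂ (fun z : ℂ => Mq m W z x y) :=
  stmt1_general I m W hWnn hWmono hWint q x y hx hy
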